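/- For any loop L, each commutator-associator subloop L_i is a fully invariant normal subloop of L (preserved by every endomorphism of L), and the quotient L_i/L_{i+1} is an abelian group. -/

import Mathlib

/-- A loop: a quasigroup with a two-sided identity. -/
class Loop (α : Type*) extends Mul α, One α where
  ldiv : α → α → α
  rdiv : α → α → α
  one_mul : ∀ a : α, 1 * a = a
  mul_one : ∀ a : α, a * 1 = a
  mul_ldiv : ∀ a b : α, a * ldiv a b = b
  ldiv_mul : ∀ a b : α, ldiv a (a * b) = b
  rdiv_mul : ∀ a b : α, rdiv a b * b = a
  mul_rdiv : ∀ a b : α, rdiv (a * b) b = a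

namespace Loop

variable {α : Type*} [Loop α]

/-- The commutator `[a,b] = (ba)\(ab)`. -/
def comm (a b : α) : α := ldiv (b * a) (a * b)

/-- The associator `(a,b,c) = (a(bc))\((ab)c)`. -/
def assoc (a b c : α) : α := ldiv (a * (b * c)) ((a * b) * c)

/-- The associator deviation indexed by a list of indices `αs = [α_n, ..., α_1]`
(stored with the *last* index first) applied to a list of arguments.
Level `0` (empty index list) is the associator. -/
def dev : List ℕ → List α → α
  | [], [a, b, c] => assoc a b c
  | (k :: rest), args =>
      let A : α → α := fun x => dev rest (args.take (k - 1) ++ x :: args.drop (k + 1))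
      ldiv (A (args.getD (k - 1) 1) * A (args.getD k 1))
        (A (args.getD (k - 1) 1 * args.getD k 1))
  | _, _ => 1

/-- A subset is a subloop if it contains `1` and is closed under
multiplication and both divisions. -/
def IsSubloop (S : Set α) : Prop :=
  (1 : α) ∈ S ∧ ∀ a ∈ S, ∀ b ∈ S, a * b ∈ S ∧ ldiv a b ∈ S ∧ rdiv a b ∈ S

/-- A subloop is normal if `xN = Nx`, `(Nx)y = N(xy)` and `y(xN) = (yx)N`. -/
def IsNormal (S : Set α) : Prop :=
  IsSubloop S ∧
  (∀ x : α, {z | ∃ n ∈ S, z = x * n} = {z | ∃ n ∈ S, z = n * x}) ∧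
  (∀ x y : α, {z | ∃ n ∈ S, z = (n * x) * y} = {z | ∃ n ∈ S, z = n * (x * y)}) ∧
  (∀ x y : α, {z | ∃ n ∈ S, z = y * (x * n)} = {z | ∃ n ∈ S, z = (y * x) * n})

/-- `N/M` is central in `L/M`: all commutators and associators involving an
element of `N` lie in `M`. -/
def CentralMod (N M : Set α) : Prop :=
  ∀ n ∈ N, ∀ x y : α,
    comm n x ∈ M ∧ comm x n ∈ M ∧
    assoc n x y ∈ M ∧ assoc x n y ∈ M ∧ assoc x y n ∈ M

/-- `[N,L]`: the smallest normal subloop `M` such that `N/M` is central in `L/M`. -/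
def bracket (N : Set α) : Set α := ⋂₀ {M | IsNormal M ∧ CentralMod N M}

end Loop

/-- The lower central series of a loop: `γ 1 = L`, `γ (i+1) = [γ i, L]`. -/
def Loop.gamma (α : Type*) [Loop α] : ℕ → Set α
  | 0 => Set.univ
  | 1 => Set.univ
  | (n + 2) => Loop.bracket (Loop.gamma α (n + 1))

namespace Loop

variable {α : Type*} [Loop α]

/-- A family `M i` of normal subloops is admissible for the
commutator-associator filtration. -/
def Admissible (M : ℕ → Set α) : Prop :=
  (∀ i, IsNormal (M i)) ∧ M 1 = Set.univ ∧
  (∀ i p q, 1 ≤ p → 1 ≤ q → i ≤ p + q →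
    ∀ a ∈ M p, ∀ b ∈ M q, comm a b ∈ M i) ∧
  (∀ i p q r, 1 ≤ p → 1 ≤ q → 1 ≤ r → i ≤ p + q + r →
    ∀ a ∈ M p, ∀ b ∈ M q, ∀ c ∈ M r, assoc a b c ∈ M i) ∧
  (∀ (i : ℕ) (idx ps : List ℕ) (xs : List α), idx ≠ [] →
    ps.length = idx.length + 3 → xs.length = idx.length + 3 →
    (∀ j < idx.length, 1 ≤ idx.getD j 0 ∧ idx.getD j 0 ≤ (idx.length - j) + 2) →
    (∀ j < ps.length, 1 ≤ ps.getD j 0 ∧ xs.getD j 1 ∈ M (ps.getD j 0)) →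
    i ≤ ps.sum → dev idx xs ∈ M i)

/-- The commutator-associator filtration: the smallest admissible family. -/
def casub (α : Type*) [Loop α] (i : ℕ) : Set α :=
  ⋂₀ {S | ∃ M : ℕ → Set α, Admissible M ∧ S = M i}

/-- Congruence modulo a (normal) subloop: `x ≡ y mod N` iff `x ∈ yN`. -/
def ModEq (N : Set α) (x y : α) : Prop := ∃ n ∈ N, x = y * n

/-- Loop homomorphisms: maps preserving multiplication. -/
def IsLoopHom {β : Type*} [Loop β] (φ : α → β) : Prop :=
  ∀ a b : α, φ (a * b) = φ a * φ b

/-- The subloop generated by a subset. -/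
def closure (S : Set α) : Set α := ⋂₀ {T | IsSubloop T ∧ S ⊆ T}

/-- Left-normed powers: `ypow y m = ((...(yy)y)...)y`. -/
def ypow (y : α) : ℕ → α
  | 0 => 1
  | (m + 1) => ypow y m * y

end Loop

section Higman

variable {L B : Type*} [Loop L] [AddCommGroup B]

/-- Multiplication in Higman's loop `(L, B)`. -/
def hmul (f : L → L → B) (x y : L × B) : L × B :=
  (x.1 * y.1, x.2 + y.2 + f x.1 y.1)

/-- Left division in Higman's loop: `(l2,b2)\(l1,b1) = (l2\l1, b1-b2-f(l2, l2\l1))`. -/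
def hldiv (f : L → L → B) (x y : L × B) : L × B :=
  (Loop.ldiv x.1 y.1, y.2 - x.2 - f x.1 (Loop.ldiv x.1 y.1))

/-- Right division in Higman's loop: `(l1,b1)/(l2,b2) = (l1/l2, b1-b2-f(l1/l2, l2))`. -/
def hrdiv (f : L → L → B) (x y : L × B) : L × B :=
  (Loop.rdiv x.1 y.1, x.2 - y.2 - f (Loop.rdiv x.1 y.1) y.1)

/-- The commutator in Higman's loop. -/
def hcomm (f : L → L → B) (x y : L × B) : L × B :=
  hldiv f (hmul f y x) (hmul f x y)

/-- The associator in Higman's loop. -/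
def hassoc (f : L → L → B) (x y z : L × B) : L × B :=
  hldiv f (hmul f x (hmul f y z)) (hmul f (hmul f x y) z)

end Higman

/-!
Admissibility of a family of subloops survives indexwise intersections and pullback along loop
homomorphisms: homomorphisms commute with commutators, associators and deviations, and the coset
identities defining normality are equalities `f '' N = g '' N` of images under translation
permutations, which commute with intersections and satisfy `f '' φ⁻¹' N = φ⁻¹' (f' '' N)` when
`φ ∘ f = f' ∘ φ`. Hence `casub`, the intersection of all admissible families, is admissible (so
each `L_i` is normal, and the commutator and associator conditions at levels `i, i, i` land in
`L_{i+1}`), and `casub ⊆ φ⁻¹' casub` for every endomorphism `φ`.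
-/

theorem Set.image_eq_setOf_exists {α β : Type*} (f : α → β) (S : Set α) :
    f '' S = {z | ∃ n ∈ S, z = f n} := by
  ext z
  simp [eq_comm]

theorem Function.Semiconj.image_preimage {α β : Type*} {φ : α → β} {f : Equiv.Perm α}
    {g : Equiv.Perm β} (h : Function.Semiconj φ f g) (S : Set β) :
    f '' (φ ⁻¹' S) = φ ⁻¹' (g '' S) := by
  have h' : Function.Semiconj φ f.symm g.symm :=
    h.inverses_right f.apply_symm_apply g.symm_apply_apply
  ext x
  simp only [Equiv.image_eq_preimage_symm, Set.mem_preimage, h' x]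

namespace Loop

section

variable {α : Type*} [Loop α]

def mulLeft (a : α) : Equiv.Perm α := ⟨(a * ·), ldiv a, ldiv_mul a, mul_ldiv a⟩

def mulRight (a : α) : Equiv.Perm α :=
  ⟨(· * a), (rdiv · a), fun b => mul_rdiv b a, fun b => rdiv_mul b a⟩

@[simp] theorem mulLeft_apply (a b : α) : mulLeft a b = a * b := rfl

@[simp] theorem mulRight_apply (a b : α) : mulRight a b = b * a := rfl

theorem isNormal_iff {S : Set α} :
    IsNormal S ↔ IsSubloop S ∧
      (∀ x, mulLeft x '' S = mulRight x '' S) ∧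
      (∀ x y, (mulRight y * mulRight x : Equiv.Perm α) '' S = mulRight (x * y) '' S) ∧
      (∀ x y, (mulLeft y * mulLeft x : Equiv.Perm α) '' S = mulLeft (y * x) '' S) := by
  simp only [Set.image_eq_setOf_exists, Equiv.Perm.mul_apply, mulLeft_apply, mulRight_apply]
  rfl

theorem IsSubloop.iInter {ι : Sort*} {S : ι → Set α} (hS : ∀ k, IsSubloop (S k)) :
    IsSubloop (⋂ k, S k) := by
  refine ⟨Set.mem_iInter.2 fun k => (hS k).1, fun a ha b hb => ?_⟩
  simp only [Set.mem_iInter] at ha hb ⊢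
  exact ⟨fun k => ((hS k).2 a (ha k) b (hb k)).1, fun k => ((hS k).2 a (ha k) b (hb k)).2.1,
    fun k => ((hS k).2 a (ha k) b (hb k)).2.2⟩

theorem IsNormal.iInter {ι : Sort*} {S : ι → Set α} (hS : ∀ k, IsNormal (S k)) :
    IsNormal (⋂ k, S k) := by
  simp only [isNormal_iff, Set.image_iInter (Equiv.bijective _)] at hS ⊢
  exact ⟨IsSubloop.iInter fun k => (hS k).1,
    fun x => Set.iInter_congr fun k => (hS k).2.1 x,
    fun x y => Set.iInter_congr fun k => (hS k).2.2.1 x y,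
    fun x y => Set.iInter_congr fun k => (hS k).2.2.2 x y⟩

end

namespace IsLoopHom

open Function

variable {α β : Type*} [Loop α] [Loop β] {φ : α → β}

theorem map_one (hφ : IsLoopHom φ) : φ 1 = 1 := by
  have h : φ 1 * φ 1 = φ 1 * 1 := by rw [← hφ, Loop.mul_one, Loop.mul_one]
  rw [← ldiv_mul (φ 1) (φ 1), h, ldiv_mul]

theorem map_mul (hφ : IsLoopHom φ) (a b : α) : φ (a * b) = φ a * φ b := hφ a b

theorem map_ldiv (hφ : IsLoopHom φ) (a b : α) : φ (ldiv a b) = ldiv (φ a) (φ b) := by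
  rw [← congrArg φ (mul_ldiv a b), hφ, ldiv_mul]

theorem map_rdiv (hφ : IsLoopHom φ) (a b : α) : φ (rdiv a b) = rdiv (φ a) (φ b) := by
  rw [← congrArg φ (rdiv_mul a b), hφ, mul_rdiv]

theorem map_comm (hφ : IsLoopHom φ) (a b : α) : φ (comm a b) = comm (φ a) (φ b) := by
  simp only [comm, hφ.map_ldiv, hφ.map_mul]

theorem map_assoc (hφ : IsLoopHom φ) (a b c : α) :
    φ (assoc a b c) = assoc (φ a) (φ b) (φ c) := by
  simp only [assoc, hφ.map_ldiv, hφ.map_mul]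

theorem map_getD (hφ : IsLoopHom φ) (xs : List α) (j : ℕ) :
    φ (xs.getD j 1) = (xs.map φ).getD j 1 := by
  rw [← hφ.map_one, List.getD_map]

theorem map_dev (hφ : IsLoopHom φ) (idx : List ℕ) (xs : List α) :
    φ (dev idx xs) = dev idx (xs.map φ) := by
  induction idx, xs using dev.induct with
  | case1 a b c => simp [dev, hφ.map_assoc]
  | case2 k rest args ih =>
    simp only [dev, hφ.map_ldiv, hφ.map_mul, ih, hφ.map_getD, List.map_append, List.map_cons,
      List.map_take, List.map_drop]
  | case3 idx xs h1 h2 =>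
    obtain rfl : idx = [] := by cases idx <;> simp_all
    rcases xs with _ | ⟨a, _ | ⟨b, _ | ⟨c, _ | ⟨d, t⟩⟩⟩⟩ <;> simp_all [dev, hφ.map_one]

theorem isSubloop_preimage (hφ : IsLoopHom φ) {S : Set β} (hS : IsSubloop S) :
    IsSubloop (φ ⁻¹' S) := by
  refine ⟨by simpa [Set.mem_preimage, hφ.map_one] using hS.1, fun a ha b hb => ?_⟩
  simpa only [Set.mem_preimage, hφ.map_mul, hφ.map_ldiv, hφ.map_rdiv] using hS.2 _ ha _ hb

theorem semiconj_mulLeft (hφ : IsLoopHom φ) (a : α) :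
    Semiconj φ (mulLeft a) (mulLeft (φ a)) :=
  hφ.map_mul a

theorem semiconj_mulRight (hφ : IsLoopHom φ) (a : α) :
    Semiconj φ (mulRight a) (mulRight (φ a)) :=
  fun b => hφ.map_mul b a

theorem isNormal_preimage (hφ : IsLoopHom φ) {S : Set β} (hS : IsNormal S) :
    IsNormal (φ ⁻¹' S) := by
  rw [isNormal_iff] at hS ⊢
  obtain ⟨hsub, hLR, hRR, hLL⟩ := hS
  have hL := hφ.semiconj_mulLeft
  have hR := hφ.semiconj_mulRight
  have hLL' (x y : α) : Semiconj φ ⇑(mulLeft y * mulLeft x)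
      ⇑(mulLeft (φ y) * mulLeft (φ x)) := (hL y).comp_right (hL x)
  have hRR' (x y : α) : Semiconj φ ⇑(mulRight y * mulRight x)
      ⇑(mulRight (φ y) * mulRight (φ x)) := (hR y).comp_right (hR x)
  refine ⟨hφ.isSubloop_preimage hsub, fun x => ?_, fun x y => ?_, fun x y => ?_⟩
  · rw [Semiconj.image_preimage (hL x), Semiconj.image_preimage (hR x), hLR]
  · rw [Semiconj.image_preimage (hRR' x y), Semiconj.image_preimage (hR (x * y)), hφ.map_mul, hRR]
  · rw [Semiconj.image_preimage (hLL' x y), Semiconj.image_preimage (hL (y * x)), hφ.map_mul, hLL]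

end IsLoopHom

variable {α : Type*} [Loop α]

theorem Admissible.iInter {ι : Sort*} {M : ι → ℕ → Set α} (hM : ∀ k, Admissible (M k)) :
    Admissible fun i => ⋂ k, M k i := by
  refine ⟨fun i => IsNormal.iInter fun k => (hM k).1 i, ?_, ?_, ?_, ?_⟩
  · simp only [(hM _).2.1, Set.iInter_univ]
  · intro i p q hp hq hi a ha b hb
    simp only [Set.mem_iInter] at ha hb ⊢
    exact fun k => (hM k).2.2.1 i p q hp hq hi a (ha k) b (hb k)
  · intro i p q r hp hq hr hi a ha b hb c hc
    simp only [Set.mem_iInter] at ha hb hc ⊢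
    exact fun k => (hM k).2.2.2.1 i p q r hp hq hr hi a (ha k) b (hb k) c (hc k)
  · intro i idx ps xs hidx hps hxs hbounds hmem hi
    simp only [Set.mem_iInter] at hmem ⊢
    exact fun k => (hM k).2.2.2.2 i idx ps xs hidx hps hxs hbounds
      (fun j hj => ⟨(hmem j hj).1, (hmem j hj).2 k⟩) hi

theorem Admissible.preimage {β : Type*} [Loop β] {φ : α → β} (hφ : IsLoopHom φ)
    {M : ℕ → Set β} (hM : Admissible M) : Admissible fun i => φ ⁻¹' M i := by
  obtain ⟨hnormal, hone, hcomm, hassoc, hdev⟩ := hM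
  refine ⟨fun i => hφ.isNormal_preimage (hnormal i), by simp [hone], ?_, ?_, ?_⟩
  · intro i p q hp hq hi a ha b hb
    simpa only [Set.mem_preimage, hφ.map_comm] using hcomm i p q hp hq hi _ ha _ hb
  · intro i p q r hp hq hr hi a ha b hb c hc
    simpa only [Set.mem_preimage, hφ.map_assoc] using hassoc i p q r hp hq hr hi _ ha _ hb _ hc
  · intro i idx ps xs hidx hps hxs hbounds hmem hi
    rw [Set.mem_preimage, hφ.map_dev]
    refine hdev i idx ps (xs.map φ) hidx hps (by simpa using hxs) hbounds
      (fun j hj => ⟨(hmem j hj).1, ?_⟩) hi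
    rw [← hφ.map_getD]
    exact (hmem j hj).2

theorem casub_eq_iInter (i : ℕ) :
    casub α i = ⋂ M : {M : ℕ → Set α // Admissible M}, M.1 i := by
  ext x
  simp only [casub, Set.mem_sInter, Set.mem_iInter, Subtype.forall]
  exact ⟨fun h M hM => h _ ⟨M, hM, rfl⟩, fun h _ ⟨M, hM, hS⟩ => hS ▸ h M hM⟩

theorem admissible_casub : Admissible (casub α) := by
  rw [show casub α = _ from funext casub_eq_iInter]
  exact Admissible.iInter fun M => M.2

theorem casub_subset {M : ℕ → Set α} (hM : Admissible M) (i : ℕ) : casub α i ⊆ M i := by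
  rw [casub_eq_iInter]
  exact Set.iInter_subset (fun M : {M : ℕ → Set α // Admissible M} => M.1 i) ⟨M, hM⟩

end Loop

/-- each commutator-associator subloop `L_i` is a fully
invariant normal subloop of `L` (preserved by every endomorphism), and the
quotient `L_i/L_{i+1}` is an abelian group: all commutators and associators of
elements of `L_i` lie in `L_{i+1}`. -/
theorem casub_normal_fully_invariant {L : Type*} [Loop L] :
    ∀ i : ℕ, 1 ≤ i →
      Loop.IsNormal (Loop.casub L i) ∧
      (∀ φ : L → L, Loop.IsLoopHom φ → φ '' Loop.casub L i ⊆ Loop.casub L i) ∧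
      (∀ a ∈ Loop.casub L i, ∀ b ∈ Loop.casub L i,
        Loop.comm a b ∈ Loop.casub L (i + 1)) ∧
      (∀ a ∈ Loop.casub L i, ∀ b ∈ Loop.casub L i, ∀ c ∈ Loop.casub L i,
        Loop.assoc a b c ∈ Loop.casub L (i + 1)) := by
  intro i hi
  obtain ⟨hnormal, -, hcomm, hassoc, -⟩ := Loop.admissible_casub (α := L)
  refine ⟨hnormal i, fun φ hφ => ?_, ?_, ?_⟩
  · exact Set.image_subset_iff.2 (Loop.casub_subset (Loop.admissible_casub.preimage hφ) i)
  · exact hcomm (i + 1) i i hi hi (by omega)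
  · exact hassoc (i + 1) i i i hi hi hi (by omega)
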